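/- Let $\mathcal{X}$ be a quasi-greedy basis of a $p$-Banach space $\mathbb{X}$, $0 < p \le 1$, with quasi-greedy constant $C$, i.e., $\|S_A(f)\| \le C\|f\|$ for every $f$ and every greedy set $A$ of $f$. Then for every finite set $A \subset \mathbb{N}$, every $\varepsilon \in \mathbb{E}^A$, and every $f \in \mathbb{X}$ with $\|f\|_\infty \le 1$ and $\operatorname{supp}(f) \cap A = \emptyset$, we have $\|\mathbb{1}_{\varepsilon,A}\| \le 2^{1/p} C \, \|\mathbb{1}_{\varepsilon,A} + f\|$. -/

import Mathlib

/-! Because `‖f‖_∞ ≤ 1` and `f` vanishes on `A`, the coefficients of `g = 𝟙_{ε,A} + f` have modulus `1`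
on `A` and modulus at most `1` off `A`. Hence `A` is already a greedy set of `g` (the set
`B = {n : |x_n^*(f)| > 1}` of the general argument is empty), `S_A g = 𝟙_{ε,A}`, and quasi-greediness
gives `‖𝟙_{ε,A}‖ ≤ C ‖g‖ ≤ 2^{1/p} C ‖g‖`. -/

def IsGreedySet {ι R X : Type*} [Semiring R] [Norm R] [AddCommMonoid X] [Module R X]
    (φ : ι → X →ₗ[R] R) (g : X) (A : Finset ι) : Prop :=
  ∀ n ∈ A, ∀ k ∉ A, ‖φ k g‖ ≤ ‖φ n g‖

section Biorthogonal

variable {ι R X : Type*} [DecidableEq ι] [Semiring R] [AddCommMonoid X] [Module R X]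
  {e : ι → X} {φ : ι → X →ₗ[R] R}

theorem biorthogonal_apply_sum_smul_add (hbi : ∀ n k, φ n (e k) = if n = k then 1 else 0)
    (A : Finset ι) (c : ι → R) (f : X) (n : ι) :
    φ n (∑ k ∈ A, c k • e k + f) = (if n ∈ A then c n else 0) + φ n f := by
  simp only [map_add, map_sum, map_smul, hbi, smul_eq_mul, mul_ite, mul_one, mul_zero,
    Finset.sum_ite_eq]

theorem sum_biorthogonal_smul_sum_smul_add (hbi : ∀ n k, φ n (e k) = if n = k then 1 else 0)
    {A : Finset ι} (c : ι → R) {f : X} (hsupp : ∀ n ∈ A, φ n f = 0) :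
    ∑ n ∈ A, φ n (∑ k ∈ A, c k • e k + f) • e n = ∑ n ∈ A, c n • e n :=
  Finset.sum_congr rfl fun n hn => by
    rw [biorthogonal_apply_sum_smul_add hbi, if_pos hn, hsupp n hn, add_zero]

theorem isGreedySet_sum_smul_add [Norm R] (hbi : ∀ n k, φ n (e k) = if n = k then 1 else 0)
    {A : Finset ι} {ε : ι → R} (hε : ∀ n ∈ A, ‖ε n‖ = 1) {f : X} (hf : ∀ n, ‖φ n f‖ ≤ 1)
    (hsupp : ∀ n ∈ A, φ n f = 0) :
    IsGreedySet φ (∑ k ∈ A, ε k • e k + f) A := by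
  intro n hn k hk
  rw [biorthogonal_apply_sum_smul_add hbi, biorthogonal_apply_sum_smul_add hbi, if_pos hn,
    if_neg hk, hsupp n hn, add_zero, zero_add, hε n hn]
  exact hf k

end Biorthogonal

theorem stmt8_general {X : Type*} [AddCommGroup X] [Module ℂ X] (p : ℝ) (hp : 0 < p)
    (N : X → ℝ) (hN0 : ∀ f, 0 ≤ N f)
    (e : ℕ → X) (φ : ℕ → X →ₗ[ℂ] ℂ)
    (hbi : ∀ n k, φ n (e k) = if n = k then 1 else 0)
    (C : ℝ)
    (hQG : ∀ (g : X) (A : Finset ℕ),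
      (∀ n ∈ A, ∀ k ∉ A, ‖φ k g‖ ≤ ‖φ n g‖) →
      N (∑ n ∈ A, φ n g • e n) ≤ C * N g)
    (A : Finset ℕ) (ε : ℕ → ℂ) (hε : ∀ n ∈ A, ‖ε n‖ = 1)
    (f : X) (hfinf : ∀ n, ‖φ n f‖ ≤ 1) (hsupp : ∀ n ∈ A, φ n f = 0) :
    N (∑ n ∈ A, ε n • e n) ≤
      2 ^ (1/p) * C * N ((∑ n ∈ A, ε n • e n) + f) := by
  have hQ := hQG _ A (isGreedySet_sum_smul_add hbi hε hfinf hsupp)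
  rw [sum_biorthogonal_smul_sum_smul_add hbi ε hsupp] at hQ
  have h_one_le : (1 : ℝ) ≤ 2 ^ (1 / p) := Real.one_le_rpow one_le_two (by positivity)
  calc N (∑ n ∈ A, ε n • e n) ≤ C * N (∑ n ∈ A, ε n • e n + f) := hQ
    _ ≤ 2 ^ (1 / p) * (C * N (∑ n ∈ A, ε n • e n + f)) :=
      le_mul_of_one_le_left ((hN0 _).trans hQ) h_one_le
    _ = 2 ^ (1 / p) * C * N (∑ n ∈ A, ε n • e n + f) := (mul_assoc _ _ _).symm

theorem stmt8 {X : Type*} [AddCommGroup X] [Module ℂ X] (p : ℝ) (hp : 0 < p) (hp1 : p ≤ 1)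
    (N : X → ℝ) (hN0 : ∀ f, 0 ≤ N f)
    (hNp : ∀ f g, N (f + g) ^ p ≤ N f ^ p + N g ^ p)
    (hNh : ∀ (a : ℂ) (f : X), N (a • f) = ‖a‖ * N f)
    (e : ℕ → X) (φ : ℕ → X →ₗ[ℂ] ℂ)
    (hbi : ∀ n k, φ n (e k) = if n = k then 1 else 0)
    (C : ℝ)
    (hQG : ∀ (g : X) (A : Finset ℕ),
      (∀ n ∈ A, ∀ k ∉ A, ‖φ k g‖ ≤ ‖φ n g‖) →
      N (∑ n ∈ A, φ n g • e n) ≤ C * N g)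
    (A : Finset ℕ) (ε : ℕ → ℂ) (hε : ∀ n ∈ A, ‖ε n‖ = 1)
    (f : X) (hfinf : ∀ n, ‖φ n f‖ ≤ 1) (hsupp : ∀ n ∈ A, φ n f = 0) :
    N (∑ n ∈ A, ε n • e n) ≤
      2 ^ (1/p) * C * N ((∑ n ∈ A, ε n • e n) + f) :=
  stmt8_general p hp N hN0 e φ hbi C hQG A ε hε f hfinf hsupp
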